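/- Let μ be a probability measure on {0,1}^V that is k-Markov and satisfies μ([1^{v}]) ≥ α > 0 for every vertex v, on a graph of degree bounded by Δ. Then there exists β with 0 < β < 1 such that for every finite set D ⊆ V of cardinality n, μ([0^D]) ≤ β^n. -/

import Mathlib

/-!
Pick greedily a maximal set `S ⊆ D` of vertices pairwise at distance at least `k`. By the
Markov property the events `[0^{v}]`, `v ∈ S`, are independent, so `μ([0^D]) ≤ μ([0^S]) ≤
(1 - α)^|S|`. By maximality the balls of radius `k - 1` around `S` cover `D`, and each has at
most `(Δ + 1)^(k - 1)` vertices, so `|S|` is at least a fixed fraction of `|D|`.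
-/

open MeasureTheory Finset

namespace SimpleGraph

variable {V : Type*} (G : SimpleGraph V)

def closedBallFinset [DecidableEq V] [G.LocallyFinite] (v : V) : ℕ → Finset V
  | 0 => {v}
  | r + 1 => (closedBallFinset v r).biUnion fun u => insert u (G.neighborFinset u)

/-- Unreachable pairs count as far apart. -/
def FarApart (k : ℕ) (u w : V) : Prop :=
  G.Reachable u w → k ≤ G.dist u w

variable {G}

theorem FarApart.symm {k : ℕ} {u w : V} (h : G.FarApart k u w) : G.FarApart k w u := by
  intro hr
  rw [dist_comm]
  exact h hr.symm

section closedBallFinset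

variable [DecidableEq V] [G.LocallyFinite]

theorem self_mem_closedBallFinset (v : V) (r : ℕ) : v ∈ G.closedBallFinset v r := by
  induction r with
  | zero => simp [closedBallFinset]
  | succ r ih =>
    rw [closedBallFinset]
    exact mem_biUnion.2 ⟨v, ih, mem_insert_self _ _⟩

theorem mem_closedBallFinset_of_walk {w v : V} (p : G.Walk w v) {r : ℕ} (hp : p.length ≤ r) :
    w ∈ G.closedBallFinset v r := by
  induction p generalizing r with
  | nil => exact self_mem_closedBallFinset _ _
  | cons hadj q ih =>
    cases r with
    | zero => simp at hp
    | succ r =>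
      rw [closedBallFinset]
      refine mem_biUnion.2 ⟨_, ih (by simpa using hp), mem_insert_of_mem ?_⟩
      simpa using hadj.symm

theorem mem_closedBallFinset_of_not_farApart {k : ℕ} {u w : V} (h : ¬ G.FarApart k u w) :
    w ∈ G.closedBallFinset u (k - 1) := by
  obtain ⟨hr, hlt⟩ : G.Reachable u w ∧ G.dist u w < k := by simpa [FarApart] using h
  obtain ⟨p, hp⟩ := hr.symm.exists_walk_length_eq_dist
  exact mem_closedBallFinset_of_walk p (by rw [hp, dist_comm]; omega)

theorem card_closedBallFinset_le {Δ : ℕ} (hdeg : ∀ v, G.degree v ≤ Δ) (v : V) (r : ℕ) :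
    #(G.closedBallFinset v r) ≤ (Δ + 1) ^ r := by
  induction r with
  | zero => simp [closedBallFinset]
  | succ r ih =>
    rw [closedBallFinset]
    refine (card_biUnion_le_card_mul _ _ (Δ + 1) fun u _ => ?_).trans ?_
    · exact (card_insert_le _ _).trans (by simpa using hdeg u)
    · rw [pow_succ]
      gcongr

/-- A maximal far-apart subset of `D` works: the balls of radius `k - 1` around it cover `D`. -/
theorem exists_farApart_subset_card_le {k C : ℕ}
    (hC : ∀ v, #(G.closedBallFinset v (k - 1)) ≤ C) (D : Finset V) :
    ∃ S ⊆ D, (S : Set V).Pairwise (G.FarApart k) ∧ #D ≤ #S * C := by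
  classical
  obtain ⟨S, hS, hmax⟩ := (D.powerset.filter fun S : Finset V =>
    (S : Set V).Pairwise (G.FarApart k)).exists_max_image card ⟨∅, by simp⟩
  rw [mem_filter, mem_powerset] at hS
  refine ⟨S, hS.1, hS.2, ?_⟩
  have hcover : D ⊆ S.biUnion fun s => G.closedBallFinset s (k - 1) := by
    intro d hd
    by_cases hdS : d ∈ S
    · exact mem_biUnion.2 ⟨d, hdS, self_mem_closedBallFinset _ _⟩
    have hnot : ¬ ((insert d S : Finset V) : Set V).Pairwise (G.FarApart k) := fun hpw => by
      have := hmax (insert d S) (mem_filter.2 ⟨mem_powerset.2 (insert_subset hd hS.1), hpw⟩)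
      rw [card_insert_of_notMem hdS] at this
      omega
    rw [coe_insert, Set.pairwise_insert] at hnot
    push Not at hnot
    obtain ⟨s, hs, -, hfar⟩ := hnot hS.2
    refine mem_biUnion.2 ⟨s, hs, mem_closedBallFinset_of_not_farApart ?_⟩
    exact fun h => hfar h.symm h
  exact (card_le_card hcover).trans (card_biUnion_le_card_mul _ _ _ fun s _ => hC s)

end closedBallFinset

end SimpleGraph

open SimpleGraph

section Markov

variable {V : Type*}

/-- The cylinder `[0^S]`. -/
def zeroCylinder (S : Set V) : Set (V → Bool) :=
  {x | ∀ v ∈ S, x v = false}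

theorem zeroCylinder_union (S T : Set V) :
    zeroCylinder (S ∪ T) = zeroCylinder S ∩ zeroCylinder T := by
  ext x
  simp only [zeroCylinder, Set.mem_union, or_imp, forall_and, Set.mem_inter_iff, Set.mem_ofPred_eq]

def IsMarkov (G : SimpleGraph V) (k : ℕ) (μ : Measure (V → Bool)) : Prop :=
  ∀ (D : Finset V) (X : Set V), (∀ u ∈ D, ∀ w ∈ X, G.FarApart k u w) →
    ∀ u P : V → Bool,
      μ ({x | ∀ w ∈ D, x w = u w} ∩ {x | ∀ w ∈ X, x w = P w}) =
        μ {x | ∀ w ∈ D, x w = u w} * μ {x | ∀ w ∈ X, x w = P w}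

variable {G : SimpleGraph V} {k : ℕ} {μ : Measure (V → Bool)}

theorem IsMarkov.measure_zeroCylinder_eq_prod [DecidableEq V] [IsProbabilityMeasure μ]
    (hμ : IsMarkov G k μ) (S : Finset V) (hS : (S : Set V).Pairwise (G.FarApart k)) :
    μ (zeroCylinder S) = ∏ v ∈ S, μ (zeroCylinder {v}) := by
  induction S using Finset.induction_on with
  | empty => simp [zeroCylinder]
  | insert v S hv ih =>
    rw [coe_insert, Set.pairwise_insert_of_notMem (by simpa using hv)] at hS
    have hfar : ∀ u ∈ ({v} : Finset V), ∀ w ∈ (S : Set V), G.FarApart k u w := by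
      intro u hu w hw
      rw [mem_singleton.1 hu]
      exact (hS.2 w hw).1
    rw [prod_insert hv, ← ih hS.1, coe_insert, Set.insert_eq, ← coe_singleton,
      zeroCylinder_union]
    exact hμ {v} S hfar (fun _ => false) (fun _ => false)

theorem measure_zeroCylinder_singleton_le [IsProbabilityMeasure μ] {α : ENNReal} {v : V}
    (hα : α ≤ μ {x | x v = true}) :
    μ (zeroCylinder {v}) ≤ 1 - α := by
  have hmeas : MeasurableSet {x : V → Bool | x v = true} :=
    measurableSet_eq_fun (measurable_pi_apply v) measurable_const
  have hcompl : zeroCylinder {v} = {x : V → Bool | x v = true}ᶜ := by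
    ext x
    simp [zeroCylinder]
  rw [hcompl, prob_compl_eq_one_sub hmeas]
  exact tsub_le_tsub_left hα 1

end Markov

theorem ENNReal.pow_le_rpow_inv_pow {γ : ENNReal} (hγ : γ ≤ 1) {m n C : ℕ} (hC : 0 < C)
    (h : n ≤ m * C) : γ ^ m ≤ (γ ^ (C⁻¹ : ℝ)) ^ n := by
  rw [← ENNReal.rpow_natCast, ← ENNReal.rpow_natCast, ← ENNReal.rpow_mul]
  refine ENNReal.rpow_le_rpow_of_exponent_ge hγ ?_
  rw [inv_mul_le_iff₀ (by exact_mod_cast hC)]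
  exact_mod_cast h.trans_eq (mul_comm _ _)

/-- If `μ` is a `k`-Markov probability measure on `{0,1}^V` (patterns on
sets at graph distance at least `k` are independent), the graph has maximum degree `Δ`, and
`μ([1^{v}]) ≥ α > 0` for every vertex `v`, then there is `β` with `0 < β < 1` such that
`μ([0^D]) ≤ β^|D|` for every finite `D ⊆ V`. -/
theorem stmt_2 {V : Type*} (G : SimpleGraph V) [G.LocallyFinite]
    (Δ k : ℕ) (hdeg : ∀ v : V, G.degree v ≤ Δ)
    (μ : Measure (V → Bool)) [IsProbabilityMeasure μ]
    (hMarkov : ∀ (D : Finset V) (X : Set V),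
      (∀ u ∈ D, ∀ w ∈ X, G.Reachable u w → k ≤ G.dist u w) →
      ∀ u P : V → Bool,
        μ ({x | ∀ w ∈ D, x w = u w} ∩ {x | ∀ w ∈ X, x w = P w}) =
          μ {x | ∀ w ∈ D, x w = u w} * μ {x | ∀ w ∈ X, x w = P w})
    (α : ENNReal) (hα0 : 0 < α) (hα : ∀ v : V, α ≤ μ {x | x v = true}) :
    ∃ β : ENNReal, 0 < β ∧ β < 1 ∧
      ∀ D : Finset V, μ {x | ∀ v ∈ D, x v = false} ≤ β ^ D.card := by
  classical
  -- the `2⁻¹` keeps `γ` positive when `α ≥ 1`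
  set γ : ENNReal := max (1 - α) 2⁻¹
  have hγ1 : γ < 1 := max_lt (ENNReal.sub_lt_self ENNReal.one_ne_top one_ne_zero hα0.ne')
    (by norm_num)
  have hγ0 : 0 < γ := lt_max_of_lt_right (by norm_num)
  set C := (Δ + 1) ^ (k - 1)
  refine ⟨γ ^ (C⁻¹ : ℝ), ENNReal.rpow_pos hγ0 (hγ1.trans ENNReal.one_lt_top).ne,
    ENNReal.rpow_lt_one hγ1 (by positivity), fun D => ?_⟩
  obtain ⟨S, hSD, hSfar, hcard⟩ :=
    exists_farApart_subset_card_le (fun v => card_closedBallFinset_le hdeg v (k - 1)) D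
  calc μ {x | ∀ v ∈ D, x v = false}
      ≤ μ (zeroCylinder S) := measure_mono fun x hx v hv => hx v (hSD hv)
    _ = ∏ v ∈ S, μ (zeroCylinder {v}) := IsMarkov.measure_zeroCylinder_eq_prod hMarkov S hSfar
    _ ≤ γ ^ #S := prod_le_pow_card _ _ _ fun v _ =>
        (measure_zeroCylinder_singleton_le (hα v)).trans (le_max_left _ _)
    _ ≤ (γ ^ (C⁻¹ : ℝ)) ^ #D := ENNReal.pow_le_rpow_inv_pow hγ1.le (by positivity) hcard
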